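/- Let A be a simple directed animal in ZxN, and enumerate its vertices increasingly for ≼: a_0 ≼ a_1 ≼ …, setting x_k := x(a_k). Then the sequence (x_k) satisfies: (a) x_{k+1} − x_k ∈ ℤ_{<0} ∪ {1} for all k, and (b) x_0 is even, and x_{k+1} is even whenever x_{k+1} ≤ (min_{i≤k} x_i) − 2. Moreover the map Ψ : A ↦ (x_k) is a bijection between the set of simple animals and the set of (finite or infinite) integer sequences satisfying (a) and (b); its inverse is given by recovering the heights via y_0 := 0 and y_k := 1 + max{ y_i : i < k and |x_k − x_i| = 1 } (with max ∅ = −1), so that Ψ^{-1}((x_k)) = {(x_k , y_k)}. -/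

import Mathlib

/-- A vertex of the lattice: an x-coordinate in ℤ and a height in ℕ. -/
abbrev Vertex := ℤ × ℕ

/-- Membership in the lattice ZxN = {(x,y) ∈ ℤ×ℕ : x+y even}. -/
def inLattice (v : Vertex) : Prop := Even (v.1 + (v.2 : ℤ))

/-- A directed animal. -/
def IsAnimal (A : Set Vertex) : Prop :=
  A.Nonempty ∧ (∀ v ∈ A, inLattice v) ∧
    ∀ v ∈ A, 0 < v.2 → ((v.1 - 1, v.2 - 1) ∈ A ∨ (v.1 + 1, v.2 - 1) ∈ A)

/-- One step of a chain witnessing the partial order ◁ inside `A`. -/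
def chainStep (A : Set Vertex) (u v : Vertex) : Prop :=
  u ∈ A ∧ v ∈ A ∧ u.2 < v.2 ∧ |v.1 - u.1| ≤ 1

/-- The relation a ◁ b. -/
def triLT (A : Set Vertex) (a b : Vertex) : Prop :=
  Relation.ReflTransGen (chainStep A) a b

/-- The total order a ≼ b on a directed animal. -/
def preOrd (A : Set Vertex) (a b : Vertex) : Prop :=
  triLT A a b ∨ (¬ triLT A a b ∧ ¬ triLT A b a ∧ b.1 < a.1)

/-- `e` enumerates `A` increasingly for ≼, with (possibly infinite) length `len`:
the values `e k` for `k < len` are exactly the elements of `A`, listed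
strictly increasingly for ≼. -/
def IsEnum (A : Set Vertex) (e : ℕ → Vertex) (len : ℕ∞) : Prop :=
  (∀ k : ℕ, (k : ℕ∞) < len → e k ∈ A) ∧
  (∀ v ∈ A, ∃ k : ℕ, (k : ℕ∞) < len ∧ e k = v) ∧
  (∀ j k : ℕ, (j : ℕ∞) < len → (k : ℕ∞) < len → j < k →
      preOrd A (e j) (e k) ∧ e j ≠ e k)

/-- A simple animal: a directed animal which is finite, or infinite with (A,≼)
order-isomorphic to (ℕ,≤); equivalently, a directed animal whose vertices can be
enumerated increasingly for ≼ along an initial segment of ℕ. -/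
def IsSimple (A : Set Vertex) : Prop :=
  IsAnimal A ∧ ∃ (e : ℕ → Vertex) (len : ℕ∞), IsEnum A e len

/-- A (finite or infinite) integer sequence: a length `len ∈ ℕ∞` and values `x k`
for `k < len` (values beyond the length are normalized to 0 so that the sequence is
determined by its meaningful entries). -/
structure PSeq where
  len : ℕ∞
  x : ℕ → ℤ
  trunc : ∀ k : ℕ, ¬ ((k : ℕ∞) < len) → x k = 0

/-- Condition (a): increments belong to ℤ_{<0} ∪ {1}. -/
def CondA (x : ℕ → ℤ) (len : ℕ∞) : Prop :=
  ∀ k : ℕ, ((k + 1 : ℕ) : ℕ∞) < len → (x (k+1) - x k < 0 ∨ x (k+1) - x k = 1)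

/-- Condition (b): x₀ is even, and x_{k+1} is even whenever
x_{k+1} ≤ (min_{i≤k} x_i) − 2. -/
def CondB (x : ℕ → ℤ) (len : ℕ∞) : Prop :=
  (0 < len → Even (x 0)) ∧
  ∀ k : ℕ, ((k + 1 : ℕ) : ℕ∞) < len →
    x (k+1) ≤ (Finset.range (k+1)).inf' Finset.nonempty_range_add_one x - 2 →
    Even (x (k+1))

/-- Sequences in the image of Ψ: nonempty and satisfying (a) and (b). -/
def GoodSeq (s : PSeq) : Prop := 0 < s.len ∧ CondA s.x s.len ∧ CondB s.x s.len

/-!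
Heights are forced by the x-coordinates. In a simple animal the parent of a vertex is listed
before it, and an earlier vertex one column away is lower (else it would follow in ≼), so
`y_k = 1 + max {y_i : i < k, |x_k - x_i| = 1}`. Consecutive vertices are either
◁-related, hence one diagonal step apart, or the second lies strictly to the left; this gives
(a), and a vertex two columns left of everything before it has no parent, so it has height 0
and even abscissa, which is (b). Conversely, (a) makes the walk `x` climb only by unit steps,
so every column between the running minimum and the current position has been visited; this
makes the recursion produce a directed animal, and the enumeration it comes from is ≼-increasing.
Since ≼-enumerations are unique, the two constructions are mutually inverse.
-/

lemma Int.abs_sub_eq_one_iff {a b : ℤ} : |a - b| = 1 ↔ a = b + 1 ∨ a = b - 1 := by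
  rw [abs_eq zero_le_one]; omega

lemma Int.abs_sub_le_one_iff {a b : ℤ} : |a - b| ≤ 1 ↔ b - 1 ≤ a ∧ a ≤ b + 1 := by
  rw [abs_le]; omega

lemma ENat.natCast_lt_of_le_of_lt {len : ℕ∞} {j k : ℕ} (h : j ≤ k) (hk : (k : ℕ∞) < len) :
    (j : ℕ∞) < len :=
  (Nat.cast_le.mpr h).trans_lt hk

lemma ENat.le_of_forall_natCast_lt {m n : ℕ∞} (h : ∀ k : ℕ, (k : ℕ∞) < m → (k : ℕ∞) < n) :
    m ≤ n := by
  by_contra! hnm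
  lift n to ℕ using hnm.ne_top
  exact lt_irrefl _ (h n hnm)

lemma Nat.cast_finset_sup_add_one (s : Finset ℕ) (f : ℕ → ℕ) :
    ((s.sup fun i => f i + 1 : ℕ) : ℤ) = 1 + s.fold max (-1) (fun i => (f i : ℤ)) := by
  induction s using Finset.induction_on with
  | empty => simp
  | insert a s ha ih =>
    rw [Finset.sup_insert, Finset.fold_insert ha, Nat.cast_max, ih, ← max_add_add_left]
    push_cast
    ring_nf

open ENat (natCast_lt_of_le_of_lt)

section Heights

/-- The height `y_k`, computed as a supremum of `y_i + 1` in `ℕ`, so that `max ∅ = -1`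
becomes `0`. -/
noncomputable def yrec (x : ℕ → ℤ) : ℕ → ℕ
  | k => ((Finset.range k).filter fun i => |x k - x i| = 1).attach.sup
      fun i => yrec x i.1 + 1
decreasing_by
  exact Finset.mem_range.mp (Finset.mem_filter.mp i.2).1

variable {x : ℕ → ℤ}

lemma yrec_eq (x : ℕ → ℤ) (k : ℕ) :
    yrec x k = ((Finset.range k).filter fun i => |x k - x i| = 1).sup (fun i => yrec x i + 1) := by
  rw [yrec]
  exact Finset.sup_attach _ (fun i => yrec x i + 1)

lemma yrec_lt_of_abs_eq_one {i k : ℕ} (hik : i < k) (h : |x k - x i| = 1) :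
    yrec x i < yrec x k := by
  rw [yrec_eq x k]
  exact Finset.le_sup (f := fun i => yrec x i + 1)
    (Finset.mem_filter.2 ⟨Finset.mem_range.2 hik, h⟩)

lemma exists_of_yrec_pos {k : ℕ} (h : 0 < yrec x k) :
    ∃ i < k, |x k - x i| = 1 ∧ yrec x i + 1 = yrec x k := by
  rw [yrec_eq] at h ⊢
  have hne : ((Finset.range k).filter fun i => |x k - x i| = 1).Nonempty := by
    rw [Finset.nonempty_iff_ne_empty]
    rintro h'
    rw [h', Finset.sup_empty] at h
    exact lt_irrefl _ h
  obtain ⟨i, hi, hsup⟩ := Finset.exists_mem_eq_sup _ hne (fun i => yrec x i + 1)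
  obtain ⟨hik, hi⟩ := Finset.mem_filter.1 hi
  exact ⟨i, Finset.mem_range.1 hik, hi, hsup.symm⟩

lemma eq_yrec_of_forall {y : ℕ → ℕ} {len : ℕ∞}
    (hlt : ∀ k : ℕ, (k : ℕ∞) < len → ∀ i < k, |x k - x i| = 1 → y i < y k)
    (hpar : ∀ k : ℕ, (k : ℕ∞) < len → 0 < y k → ∃ i < k, |x k - x i| = 1 ∧ y i + 1 = y k) :
    ∀ k : ℕ, (k : ℕ∞) < len → y k = yrec x k := by
  intro k
  induction k using Nat.strong_induction_on with
  | _ k ih =>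
  intro hk
  have hsup : ((Finset.range k).filter fun i => |x k - x i| = 1).sup (fun i => yrec x i + 1) =
      ((Finset.range k).filter fun i => |x k - x i| = 1).sup (fun i => y i + 1) := by
    refine Finset.sup_congr rfl fun i hi => ?_
    have hik := Finset.mem_range.1 (Finset.mem_filter.1 hi).1
    rw [ih i hik (natCast_lt_of_le_of_lt hik.le hk)]
  rw [yrec_eq, hsup]
  apply le_antisymm
  · rcases Nat.eq_zero_or_pos (y k) with h0 | hpos
    · exact h0 ▸ Nat.zero_le _
    · obtain ⟨i, hik, hi, hiy⟩ := hpar k hk hpos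
      exact hiy ▸ Finset.le_sup (f := fun i => y i + 1)
        (Finset.mem_filter.2 ⟨Finset.mem_range.2 hik, hi⟩)
  · exact Finset.sup_le fun i hi =>
      hlt k hk i (Finset.mem_range.1 (Finset.mem_filter.1 hi).1) (Finset.mem_filter.1 hi).2

end Heights

section Animals

variable {A : Set Vertex} {a b u v : Vertex}

lemma inLattice_iff_emod : inLattice v ↔ (v.1 + v.2) % 2 = 0 := Int.even_iff

lemma chainStep.triLT (h : chainStep A u v) : triLT A u v := Relation.ReflTransGen.single h

lemma triLT.eq_or_snd_lt (h : triLT A a b) : a = b ∨ a.2 < b.2 := by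
  induction h with
  | refl => exact Or.inl rfl
  | tail _ hstep ih =>
    rcases ih with rfl | ih
    · exact Or.inr hstep.2.2.1
    · exact Or.inr (ih.trans hstep.2.2.1)

lemma preOrd_antisymm (hab : preOrd A a b) (hba : preOrd A b a) : a = b := by
  by_contra hne
  rcases hab with hab | ⟨-, hnba, hx⟩ <;> rcases hba with hba | ⟨-, hnab, hx'⟩
  · obtain h | hab := hab.eq_or_snd_lt
    · exact hne h
    obtain h | hba := hba.eq_or_snd_lt
    · exact hne h.symm
    · omega
  · exact hnab hab
  · exact hnba hba
  · omega

end Animals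

namespace IsEnum

variable {A : Set Vertex} {e e' : ℕ → Vertex} {len len' : ℕ∞} {i j k m : ℕ}

lemma inj (hE : IsEnum A e len) (hj : (j : ℕ∞) < len) (hk : (k : ℕ∞) < len) (h : e j = e k) :
    j = k := by
  by_contra hne
  rcases Nat.lt_or_gt_of_ne hne with hlt | hlt
  · exact (hE.2.2 j k hj hk hlt).2 h
  · exact (hE.2.2 k j hk hj hlt).2 h.symm

lemma le_of_preOrd (hE : IsEnum A e len) (hj : (j : ℕ∞) < len) (hk : (k : ℕ∞) < len)
    (h : preOrd A (e j) (e k)) : j ≤ k := by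
  by_contra! hkj
  exact (hE.2.2 k j hk hj hkj).2 (preOrd_antisymm (hE.2.2 k j hk hj hkj).1 h)

lemma le_of_chainStep (hE : IsEnum A e len) (hj : (j : ℕ∞) < len) (hk : (k : ℕ∞) < len)
    (h : chainStep A (e j) (e k)) : j ≤ k :=
  hE.le_of_preOrd hj hk (Or.inl h.triLT)

lemma fst_add_snd_emod_two (hA : IsAnimal A) (hE : IsEnum A e len) (hk : (k : ℕ∞) < len) :
    ((e k).1 + (e k).2) % 2 = 0 :=
  inLattice_iff_emod.1 (hA.2.1 _ (hE.1 k hk))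

lemma exists_parent (hA : IsAnimal A) (hE : IsEnum A e len) (hk : (k : ℕ∞) < len)
    (hpos : 0 < (e k).2) : ∃ i < k, |(e k).1 - (e i).1| = 1 ∧ (e i).2 + 1 = (e k).2 := by
  have hkA := hE.1 k hk
  obtain ⟨p, hp, hpx, hpy⟩ : ∃ p ∈ A, |(e k).1 - p.1| = 1 ∧ p.2 + 1 = (e k).2 := by
    rcases hA.2.2 _ hkA hpos with hp | hp
    · exact ⟨_, hp, by simp, by simp only; omega⟩
    · exact ⟨_, hp, by simp, by simp only; omega⟩
  obtain ⟨i, hi, rfl⟩ := hE.2.1 p hp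
  have hik : i ≤ k := hE.le_of_chainStep hi hk ⟨hp, hkA, by omega, hpx.le⟩
  exact ⟨i, lt_of_le_of_ne hik (by rintro rfl; omega), hpx, hpy⟩

lemma snd_lt_of_abs_eq_one (hA : IsAnimal A) (hE : IsEnum A e len) (hik : i < k)
    (hk : (k : ℕ∞) < len) (h : |(e k).1 - (e i).1| = 1) : (e i).2 < (e k).2 := by
  have hi := natCast_lt_of_le_of_lt hik.le hk
  have hpk := hE.fst_add_snd_emod_two hA hk
  have hpi := hE.fst_add_snd_emod_two hA hi
  rw [Int.abs_sub_eq_one_iff] at h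
  by_contra! hle
  have hlt : (e k).2 < (e i).2 := by omega
  have := hE.le_of_chainStep hk hi
    ⟨hE.1 k hk, hE.1 i hi, hlt, by rw [Int.abs_sub_le_one_iff]; omega⟩
  omega

lemma snd_eq_yrec (hA : IsAnimal A) (hE : IsEnum A e len) (hk : (k : ℕ∞) < len) :
    (e k).2 = yrec (fun i => (e i).1) k :=
  eq_yrec_of_forall (fun _ hk _ hik h => hE.snd_lt_of_abs_eq_one hA hik hk h)
    (fun _ hk hpos => hE.exists_parent hA hk hpos) k hk

lemma chainStep_succ (hE : IsEnum A e len) (hk1 : ((k + 1 : ℕ) : ℕ∞) < len)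
    (h : triLT A (e k) (e (k + 1))) : chainStep A (e k) (e (k + 1)) := by
  have hk := natCast_lt_of_le_of_lt k.le_succ hk1
  rcases h.cases_head with heq | ⟨c, hstep, hrest⟩
  · exact absurd (hE.inj hk hk1 heq) k.succ_ne_self.symm
  obtain ⟨m, hm, rfl⟩ := hE.2.1 c hstep.2.1
  have hkm : k ≤ m := hE.le_of_chainStep hk hm hstep
  have hmk : m ≤ k + 1 := hE.le_of_preOrd hm hk1 (Or.inl hrest)
  obtain rfl | rfl : m = k ∨ m = k + 1 := by omega
  · exact absurd hstep.2.2.1 (lt_irrefl _)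
  · exact hstep

lemma condA (hA : IsAnimal A) (hE : IsEnum A e len) : CondA (fun k => (e k).1) len := by
  intro k hk1
  have hk := natCast_lt_of_le_of_lt k.le_succ hk1
  simp only
  rcases (hE.2.2 k (k + 1) hk hk1 k.lt_succ_self).1 with h | ⟨-, -, hx⟩
  · obtain ⟨-, -, hy, hdx⟩ := hE.chainStep_succ hk1 h
    rw [Int.abs_sub_le_one_iff] at hdx
    suffices (e (k + 1)).1 ≠ (e k).1 by omega
    intro hx
    -- Same column means two levels apart, so the parent of `e (k + 1)` lies above `e k`,
    -- hence after it in the enumeration.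
    have hpk := hE.fst_add_snd_emod_two hA hk
    have hpk1 := hE.fst_add_snd_emod_two hA hk1
    obtain ⟨i, hik, hix, hiy⟩ := hE.exists_parent hA hk1 (by omega)
    have hi := natCast_lt_of_le_of_lt hik.le hk1
    rw [Int.abs_sub_eq_one_iff] at hix
    have hki : k ≤ i := hE.le_of_chainStep hk hi
      ⟨hE.1 k hk, hE.1 i hi, by omega, by rw [Int.abs_sub_le_one_iff]; omega⟩
    obtain rfl : i = k := by omega
    omega
  · omega

lemma snd_eq_zero_of_forall_abs_ne_one (hA : IsAnimal A) (hE : IsEnum A e len) (hk : (k : ℕ∞) < len)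
    (h : ∀ i < k, |(e k).1 - (e i).1| ≠ 1) : (e k).2 = 0 := by
  by_contra hne
  obtain ⟨i, hik, hix, -⟩ := hE.exists_parent hA hk (Nat.pos_of_ne_zero hne)
  exact h i hik hix

lemma condB (hA : IsAnimal A) (hE : IsEnum A e len) : CondB (fun k => (e k).1) len := by
  have even_of_isolated : ∀ k : ℕ, (k : ℕ∞) < len → (∀ i < k, |(e k).1 - (e i).1| ≠ 1) →
      Even (e k).1 := fun k hk h => by
    simpa [inLattice, hE.snd_eq_zero_of_forall_abs_ne_one hA hk h] using hA.2.1 _ (hE.1 k hk)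
  refine ⟨fun h0 => even_of_isolated 0 (by exact_mod_cast h0) fun i hi => absurd hi i.not_lt_zero,
    fun k hk1 hmin => even_of_isolated (k + 1) hk1 fun i hik hix => ?_⟩
  have := Finset.inf'_le (fun i => (e i).1) (Finset.mem_range.2 hik)
  simp only at hmin this
  rw [Int.abs_sub_eq_one_iff] at hix
  omega

lemma le_of_apply_eq (hE : IsEnum A e len) (hk : (k : ℕ∞) < len)
    (hagree : ∀ i < k, e' i = e i) (h : e' m = e k) : k ≤ m := by
  by_contra! hmk
  exact hmk.ne (hE.inj (natCast_lt_of_le_of_lt hmk.le hk) hk ((hagree m hmk).symm.trans h))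

lemma lt_and_apply_eq (h₁ : IsEnum A e len) (h₂ : IsEnum A e' len') :
    ∀ k : ℕ, (k : ℕ∞) < len → (k : ℕ∞) < len' ∧ e k = e' k := by
  intro k
  induction k using Nat.strong_induction_on with
  | _ k ih =>
  intro hk
  have hagree : ∀ i < k, e i = e' i := fun i hik => (ih i hik (natCast_lt_of_le_of_lt hik.le hk)).2
  obtain ⟨m, hm, hme⟩ := h₂.2.1 (e k) (h₁.1 k hk)
  obtain rfl | hkm := (h₁.le_of_apply_eq hk (fun i hi => (hagree i hi).symm) hme).eq_or_lt
  · exact ⟨hm, hme.symm⟩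
  have hk' := natCast_lt_of_le_of_lt hkm.le hm
  obtain ⟨n, hn, hne⟩ := h₁.2.1 (e' k) (h₂.1 k hk')
  obtain rfl | hkn := (h₂.le_of_apply_eq hk' hagree hne).eq_or_lt
  · exact ⟨hk', hne⟩
  -- Otherwise `e k ≺ e n = e' k ≺ e' m = e k`.
  have h₁₂ : preOrd A (e k) (e' k) := hne ▸ (h₁.2.2 k n hk hn hkn).1
  have h₂₁ : preOrd A (e' k) (e k) := hme ▸ (h₂.2.2 k m hk' hm hkm).1
  exact absurd (h₂.inj hm hk' (hme.trans (preOrd_antisymm h₁₂ h₂₁))) hkm.ne'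

lemma unique (h₁ : IsEnum A e len) (h₂ : IsEnum A e' len') :
    len = len' ∧ ∀ k : ℕ, (k : ℕ∞) < len → e k = e' k :=
  ⟨le_antisymm (ENat.le_of_forall_natCast_lt fun k hk => (h₁.lt_and_apply_eq h₂ k hk).1)
      (ENat.le_of_forall_natCast_lt fun k hk => (h₂.lt_and_apply_eq h₁ k hk).1),
    fun k hk => (h₁.lt_and_apply_eq h₂ k hk).2⟩

end IsEnum

namespace CondA

variable {x : ℕ → ℤ} {len : ℕ∞} {j k p q : ℕ}

lemma step (hA : CondA x len) (hk1 : ((k + 1 : ℕ) : ℕ∞) < len) :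
    x (k + 1) < x k ∨ x (k + 1) = x k + 1 := by
  rcases hA k hk1 with h | h
  · exact Or.inl (by omega)
  · exact Or.inr (by omega)

/-- Climbing only by unit steps, the walk has visited every column between its running minimum
and its current position. -/
lemma exists_eq_or_forall_lt (hA : CondA x len) (hk : (k : ℕ∞) < len) {z : ℤ} (hz : z ≤ x k) :
    (∃ i ≤ k, x i = z) ∨ ∀ i ≤ k, z < x i := by
  induction k with
  | zero =>
    rcases hz.eq_or_lt with rfl | hz
    · exact Or.inl ⟨0, le_rfl, rfl⟩
    · exact Or.inr fun i hi => by rwa [Nat.le_zero.1 hi]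
  | succ k ih =>
    rcases hz.eq_or_lt with rfl | hz
    · exact Or.inl ⟨k + 1, le_rfl, rfl⟩
    have hk' := natCast_lt_of_le_of_lt k.le_succ hk
    rcases ih hk' (by rcases hA.step hk with h | h <;> omega) with ⟨i, hik, hi⟩ | hlt
    · exact Or.inl ⟨i, hik.trans k.le_succ, hi⟩
    · refine Or.inr fun i hik => ?_
      rcases hik.lt_or_eq with hik | rfl
      · exact hlt i (Nat.lt_succ_iff.1 hik)
      · exact hz

lemma exists_eq_add_one (hA : CondA x len) (hq : (q : ℕ∞) < len) (hpq : p < q) {c : ℤ}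
    (hp : x p ≤ c) (hc : c < x q) : ∃ t, p < t ∧ t ≤ q ∧ x t = c + 1 := by
  induction q with
  | zero => omega
  | succ q ih =>
    by_cases hcq : c < x q
    · have hpq' : p < q := by
        rcases Nat.lt_succ_iff_lt_or_eq.1 hpq with h | rfl
        · exact h
        · omega
      obtain ⟨t, hpt, htq, ht⟩ := ih (natCast_lt_of_le_of_lt q.le_succ hq) hpq' hcq
      exact ⟨t, hpt, htq.trans q.le_succ, ht⟩
    · rcases hA.step hq with h | h
      · omega
      · exact ⟨q + 1, hpq, le_rfl, by omega⟩

lemma yrec_lt_of_eq (hA : CondA x len) (hjk : j < k) (hk : (k : ℕ∞) < len) (hx : x j = x k) :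
    yrec x j < yrec x k := by
  obtain ⟨m, rfl⟩ : ∃ m, k = m + 1 := ⟨k - 1, by omega⟩
  have hm := natCast_lt_of_le_of_lt m.le_succ hk
  have hjm : j < m := by
    rcases Nat.lt_succ_iff_lt_or_eq.1 hjk with h | rfl
    · exact h
    · rcases hA.step hk with h | h <;> omega
  rcases hA.step hk with h | h
  · -- Between `j` and `m` the walk climbed from column `x j` past `x j + 1`.
    obtain ⟨t, hjt, htm, ht⟩ := hA.exists_eq_add_one hm hjm le_rfl (by omega)
    calc yrec x j < yrec x t :=
          yrec_lt_of_abs_eq_one hjt (by rw [Int.abs_sub_eq_one_iff]; omega)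
      _ < yrec x (m + 1) :=
          yrec_lt_of_abs_eq_one (by omega) (by rw [Int.abs_sub_eq_one_iff]; omega)
  · calc yrec x j < yrec x m :=
          yrec_lt_of_abs_eq_one hjm (by rw [Int.abs_sub_eq_one_iff]; omega)
      _ < yrec x (m + 1) :=
          yrec_lt_of_abs_eq_one m.lt_succ_self (by rw [Int.abs_sub_eq_one_iff]; omega)

lemma yrec_lt_of_abs_le_one (hA : CondA x len) (hjk : j < k) (hk : (k : ℕ∞) < len)
    (hx : |x k - x j| ≤ 1) : yrec x j < yrec x k := by
  by_cases h : x j = x k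
  · exact hA.yrec_lt_of_eq hjk hk h
  · rw [Int.abs_sub_le_one_iff] at hx
    exact yrec_lt_of_abs_eq_one hjk (by rw [Int.abs_sub_eq_one_iff]; omega)

lemma even_of_forall_abs_ne_one (hA : CondA x len) (hB : CondB x len) (hk : (k : ℕ∞) < len)
    (h : ∀ i < k, |x k - x i| ≠ 1) : Even (x k) := by
  cases k with
  | zero => exact hB.1 (by exact_mod_cast hk)
  | succ m =>
    have hm := natCast_lt_of_le_of_lt m.le_succ hk
    have hne : ∀ i ≤ m, x i ≠ x (m + 1) + 1 := fun i hi hxi =>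
      h i (Nat.lt_succ_of_le hi) (by rw [hxi]; simp)
    rcases hA.step hk with hdown | hup
    · rcases hA.exists_eq_or_forall_lt hm (z := x (m + 1) + 1) (by omega) with ⟨i, hi, hxi⟩ | hlt
      · exact absurd hxi (hne i hi)
      · refine hB.2 m hk ?_
        have := Finset.le_inf' Finset.nonempty_range_add_one x (a := x (m + 1) + 2)
          fun i hi => by have := hlt i (Nat.lt_succ_iff.1 (Finset.mem_range.1 hi)); omega
        omega
    · exact absurd (by rw [Int.abs_sub_eq_one_iff]; omega) (h m m.lt_succ_self)

lemma even_add_yrec (hA : CondA x len) (hB : CondB x len) :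
    ∀ k : ℕ, (k : ℕ∞) < len → Even (x k + yrec x k) := by
  intro k
  induction k using Nat.strong_induction_on with
  | _ k ih =>
  intro hk
  rcases Nat.eq_zero_or_pos (yrec x k) with h0 | hpos
  · rw [h0, Nat.cast_zero, add_zero]
    exact hA.even_of_forall_abs_ne_one hB hk fun i hik hi => by
      have := yrec_lt_of_abs_eq_one hik hi; omega
  · obtain ⟨i, hik, hi, hiy⟩ := exists_of_yrec_pos hpos
    have := Int.even_iff.1 (ih i hik (natCast_lt_of_le_of_lt hik.le hk))
    rw [Int.abs_sub_eq_one_iff] at hi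
    rw [Int.even_iff]
    omega

end CondA

/-- The set `Ψ⁻¹(x) = {(x_k, y_k) : k < len}`. -/
def seqAnimal (x : ℕ → ℤ) (len : ℕ∞) : Set Vertex :=
  {v | ∃ k : ℕ, (k : ℕ∞) < len ∧ (x k, yrec x k) = v}

namespace CondA

variable {x : ℕ → ℤ} {len : ℕ∞} {j k p q : ℕ}

lemma eq_of_pair_yrec_eq (hA : CondA x len) (hj : (j : ℕ∞) < len) (hk : (k : ℕ∞) < len)
    (h : ((x j, yrec x j) : Vertex) = (x k, yrec x k)) : j = k := by
  obtain ⟨hx, hy⟩ := Prod.mk.inj h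
  by_contra hne
  rcases Nat.lt_or_gt_of_ne hne with hlt | hlt
  · exact (hA.yrec_lt_of_eq hlt hk hx).ne hy
  · exact (hA.yrec_lt_of_eq hlt hj hx.symm).ne' hy

lemma chainStep_of_lt (hA : CondA x len) (hjk : j < k) (hk : (k : ℕ∞) < len)
    (hx : |x k - x j| ≤ 1) :
    chainStep (seqAnimal x len) (x j, yrec x j) (x k, yrec x k) :=
  ⟨⟨j, natCast_lt_of_le_of_lt hjk.le hk, rfl⟩, ⟨k, hk, rfl⟩, hA.yrec_lt_of_abs_le_one hjk hk hx, hx⟩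

lemma lt_of_chainStep (hA : CondA x len) (hp : (p : ℕ∞) < len)
    (h : chainStep (seqAnimal x len) (x p, yrec x p) (x q, yrec x q)) : p < q := by
  obtain ⟨-, -, hy, hx⟩ := h
  by_contra! hqp
  rcases hqp.eq_or_lt with rfl | hqp
  · exact lt_irrefl _ hy
  · exact (hA.yrec_lt_of_abs_le_one hqp hp (by rwa [abs_sub_comm])).not_gt hy

lemma le_of_triLT (hA : CondA x len) (hp : (p : ℕ∞) < len) (hq : (q : ℕ∞) < len)
    (h : triLT (seqAnimal x len) (x p, yrec x p) (x q, yrec x q)) : p ≤ q := by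
  suffices ∀ v, triLT (seqAnimal x len) (x p, yrec x p) v →
      ∀ q : ℕ, (q : ℕ∞) < len → v = (x q, yrec x q) → p ≤ q from this _ h q hq rfl
  intro v hv
  induction hv with
  | refl => exact fun q hq h => (hA.eq_of_pair_yrec_eq hp hq h).le
  | tail _ hstep ih =>
    rintro q hq rfl
    obtain ⟨t, ht, rfl⟩ := hstep.1
    exact (ih t ht rfl).trans (hA.lt_of_chainStep ht hstep).le

lemma triLT_of_le (hA : CondA x len) (hjk : j < k) (hk : (k : ℕ∞) < len) (hx : x j ≤ x k) :
    triLT (seqAnimal x len) (x j, yrec x j) (x k, yrec x k) := by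
  induction k using Nat.strong_induction_on with
  | _ k ih =>
  by_cases hclose : x k ≤ x j + 1
  · exact (hA.chainStep_of_lt hjk hk (by rw [Int.abs_sub_le_one_iff]; omega)).triLT
  -- Pass through a visit of column `x k - 1` after time `j`.
  obtain ⟨t, hjt, htk, ht⟩ := hA.exists_eq_add_one hk hjk (c := x k - 2) (by omega) (by omega)
  have htk' : t < k := lt_of_le_of_ne htk (by rintro rfl; omega)
  exact (ih t htk' hjt (natCast_lt_of_le_of_lt htk'.le hk) (by omega)).tail
    (hA.chainStep_of_lt htk' hk (by rw [Int.abs_sub_le_one_iff]; omega))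

lemma isEnum_seqAnimal (hA : CondA x len) :
    IsEnum (seqAnimal x len) (fun k => (x k, yrec x k)) len := by
  refine ⟨fun k hk => ⟨k, hk, rfl⟩, fun v ⟨k, hk, hv⟩ => ⟨k, hk, hv⟩,
    fun j k hj hk hjk => ⟨?_, fun h => hjk.ne (hA.eq_of_pair_yrec_eq hj hk h)⟩⟩
  by_cases hx : x j ≤ x k
  · exact Or.inl (hA.triLT_of_le hjk hk hx)
  by_cases ht : triLT (seqAnimal x len) (x j, yrec x j) (x k, yrec x k)
  · exact Or.inl ht
  · exact Or.inr ⟨ht, fun h => (hA.le_of_triLT hk hj h).not_gt hjk, by simp only; omega⟩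

lemma isAnimal_seqAnimal (hA : CondA x len) (hB : CondB x len) (h0 : 0 < len) :
    IsAnimal (seqAnimal x len) := by
  refine ⟨⟨_, 0, by exact_mod_cast h0, rfl⟩, ?_, ?_⟩
  · rintro _ ⟨k, hk, rfl⟩
    exact hA.even_add_yrec hB k hk
  · rintro _ ⟨k, hk, rfl⟩ hpos
    obtain ⟨i, hik, hi, hiy⟩ := exists_of_yrec_pos hpos
    have hiS : (x i, yrec x i) ∈ seqAnimal x len :=
      ⟨i, natCast_lt_of_le_of_lt hik.le hk, rfl⟩
    rw [Int.abs_sub_eq_one_iff] at hi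
    rcases hi with hi | hi
    · exact Or.inl (by convert hiS using 2 <;> simp only <;> omega)
    · exact Or.inr (by convert hiS using 2 <;> simp only <;> omega)

end CondA

lemma PSeq.ext_of_lt {s t : PSeq} (hlen : s.len = t.len)
    (hx : ∀ k : ℕ, (k : ℕ∞) < t.len → s.x k = t.x k) : s = t := by
  obtain ⟨len, x, hx₀⟩ := s
  obtain ⟨len', x', hx₀'⟩ := t
  obtain rfl : len = len' := hlen
  congr
  funext k
  by_cases hk : (k : ℕ∞) < len
  · exact hx k hk
  · rw [hx₀ k hk, hx₀' k hk]

lemma IsSimple.exists_isEnum_fst_eq_zero {A : Set Vertex} (hS : IsSimple A) :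
    ∃ (e : ℕ → Vertex) (len : ℕ∞), IsEnum A e len ∧ ∀ k : ℕ, ¬ (k : ℕ∞) < len → (e k).1 = 0 := by
  obtain ⟨-, e, len, hE⟩ := hS
  refine ⟨fun k => if (k : ℕ∞) < len then e k else 0, len,
    ⟨fun k hk => ?_, fun v hv => ?_, fun j k hj hk hjk => ?_⟩, fun k hk => by simp [hk]⟩
  · simpa [hk] using hE.1 k hk
  · obtain ⟨k, hk, rfl⟩ := hE.2.1 v hv
    exact ⟨k, hk, by simp [hk]⟩
  · simpa [hj, hk] using hE.2.2 j k hj hk hjk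

/-- `Ψ(A)`, read off an enumeration of `A` set to `0` past its length. -/
noncomputable def animalSeq {A : Set Vertex} (hS : IsSimple A) : PSeq where
  len := hS.exists_isEnum_fst_eq_zero.choose_spec.choose
  x k := (hS.exists_isEnum_fst_eq_zero.choose k).1
  trunc := hS.exists_isEnum_fst_eq_zero.choose_spec.choose_spec.2

section Encoding

variable {A : Set Vertex} {e : ℕ → Vertex} {len : ℕ∞}

lemma exists_isEnum_animalSeq (hS : IsSimple A) :
    ∃ e, IsEnum A e (animalSeq hS).len ∧ (animalSeq hS).x = fun k => (e k).1 :=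
  ⟨_, hS.exists_isEnum_fst_eq_zero.choose_spec.choose_spec.1, rfl⟩

lemma animalSeq_eq (hS : IsSimple A) (hE : IsEnum A e len) :
    (animalSeq hS).len = len ∧ ∀ k : ℕ, (k : ℕ∞) < len → (animalSeq hS).x k = (e k).1 := by
  obtain ⟨e₀, hE₀, hx⟩ := exists_isEnum_animalSeq hS
  obtain ⟨hlen, heq⟩ := hE₀.unique hE
  exact ⟨hlen, fun k hk => by rw [hx, ← heq k (hlen ▸ hk)]⟩

lemma goodSeq_animalSeq (hS : IsSimple A) : GoodSeq (animalSeq hS) := by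
  obtain ⟨e, hE, hx⟩ := exists_isEnum_animalSeq hS
  obtain ⟨v, hv⟩ := hS.1.1
  obtain ⟨k, hk, -⟩ := hE.2.1 v hv
  exact ⟨zero_le.trans_lt hk, hx ▸ hE.condA hS.1, hx ▸ hE.condB hS.1⟩

lemma IsEnum.seqAnimal_eq (hA : IsAnimal A) (hE : IsEnum A e len) :
    seqAnimal (fun k => (e k).1) len = A := by
  ext v
  constructor
  · rintro ⟨k, hk, rfl⟩
    rw [← hE.snd_eq_yrec hA hk]
    exact hE.1 k hk
  · intro hv
    obtain ⟨k, hk, rfl⟩ := hE.2.1 v hv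
    exact ⟨k, hk, by rw [← hE.snd_eq_yrec hA hk]⟩

lemma seqAnimal_animalSeq (hS : IsSimple A) :
    seqAnimal (animalSeq hS).x (animalSeq hS).len = A := by
  obtain ⟨e, hE, hx⟩ := exists_isEnum_animalSeq hS
  rw [hx]
  exact hE.seqAnimal_eq hS.1

lemma isSimple_seqAnimal {s : PSeq} (hs : GoodSeq s) : IsSimple (seqAnimal s.x s.len) :=
  ⟨hs.2.1.isAnimal_seqAnimal hs.2.2 hs.1, _, _, hs.2.1.isEnum_seqAnimal⟩

lemma animalSeq_seqAnimal {s : PSeq} (hs : GoodSeq s) :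
    animalSeq (isSimple_seqAnimal hs) = s :=
  PSeq.ext_of_lt (animalSeq_eq _ hs.2.1.isEnum_seqAnimal).1
    (animalSeq_eq _ hs.2.1.isEnum_seqAnimal).2

end Encoding

noncomputable def pathEncoding : {A : Set Vertex // IsSimple A} ≃ {s : PSeq // GoodSeq s} where
  toFun A := ⟨animalSeq A.2, goodSeq_animalSeq A.2⟩
  invFun s := ⟨seqAnimal s.1.x s.1.len, isSimple_seqAnimal s.2⟩
  left_inv A := Subtype.ext (seqAnimal_animalSeq A.2)
  right_inv s := Subtype.ext (animalSeq_seqAnimal s.2)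

theorem path_encoding_of_simple_animals :
    (∀ (A : Set Vertex) (e : ℕ → Vertex) (len : ℕ∞),
        IsSimple A → IsEnum A e len →
        CondA (fun k => (e k).1) len ∧ CondB (fun k => (e k).1) len) ∧
    (∃ Φ : {A : Set Vertex // IsSimple A} ≃ {s : PSeq // GoodSeq s},
      (∀ (A : {A : Set Vertex // IsSimple A}) (e : ℕ → Vertex) (len : ℕ∞),
          IsEnum A.1 e len →
          (Φ A).1.len = len ∧ ∀ k : ℕ, (k : ℕ∞) < len → (Φ A).1.x k = (e k).1) ∧
      (∀ s : {s : PSeq // GoodSeq s}, ∃ y : ℕ → ℕ,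
          (∀ k : ℕ, (k : ℕ∞) < s.1.len →
            (y k : ℤ) = 1 + ((Finset.range k).filter
                (fun i => |s.1.x k - s.1.x i| = 1)).fold max (-1)
                (fun i => (y i : ℤ))) ∧
          IsEnum (Φ.symm s).1 (fun k => (s.1.x k, y k)) s.1.len)) := by
  refine ⟨fun A e len hS hE => ⟨hE.condA hS.1, hE.condB hS.1⟩, pathEncoding,
    fun A e len hE => animalSeq_eq A.2 hE, fun s => ⟨yrec s.1.x, fun k _ => ?_,
    s.2.2.1.isEnum_seqAnimal⟩⟩
  rw [yrec_eq, Nat.cast_finset_sup_add_one]
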